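/- With T(ζ) as defined from ζ₁ and φ = (φ₁,φ₂,φ₃), for every μ ∈ ℂ one has the scalar identity T(μ)† · T(μ*) = (1/|ζ₁|⁴)·((μ*)² − (ζ₁*)²)·((μ*)² − ζ₁²)·I₃, where † denotes the conjugate transpose and I₃ the 3×3 identity matrix. -/

import Mathlib

open Complex Matrix

noncomputable section

/-- D = ζ₁|φ₁|² + ζ₁^*(|φ₂|² + |φ₃|²). -/
def Dval (ζ₁ : ℂ) (φ : Fin 3 → ℂ) : ℂ :=
  ζ₁ * ((‖φ 0‖ ^ 2 : ℝ) : ℂ)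
    + starRingEnd ℂ ζ₁ * (((‖φ 1‖ ^ 2 : ℝ) : ℂ) + ((‖φ 2‖ ^ 2 : ℝ) : ℂ))

/-- The diagonal factor N(ζ). -/
def Nmat (ζ₁ : ℂ) (φ : Fin 3 → ℂ) (ζ : ℂ) : Matrix (Fin 3) (Fin 3) ℂ :=
  Matrix.diagonal ![ζ * φ 0 / (ζ₁ * Dval ζ₁ φ),
    ζ * φ 1 / (ζ₁ * starRingEnd ℂ (Dval ζ₁ φ)),
    ζ * φ 2 / (ζ₁ * starRingEnd ℂ (Dval ζ₁ φ))]

/-- The matrix factor M(ζ). -/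
def Mmat (ζ₁ : ℂ) (φ : Fin 3 → ℂ) (ζ : ℂ) : Matrix (Fin 3) (Fin 3) ℂ :=
  !![ζ * starRingEnd ℂ (φ 0), starRingEnd ℂ ζ₁ * starRingEnd ℂ (φ 1),
       starRingEnd ℂ ζ₁ * starRingEnd ℂ (φ 2);
     starRingEnd ℂ ζ₁ * starRingEnd ℂ (φ 0), ζ * starRingEnd ℂ (φ 1), ζ * starRingEnd ℂ (φ 2);
     starRingEnd ℂ ζ₁ * starRingEnd ℂ (φ 0), ζ * starRingEnd ℂ (φ 1), ζ * starRingEnd ℂ (φ 2)]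

/-- The reduced Darboux matrix T(ζ). -/
def Tmat (ζ₁ : ℂ) (φ : Fin 3 → ℂ) (ζ : ℂ) : Matrix (Fin 3) (Fin 3) ℂ :=
  ((ζ ^ 2 - (starRingEnd ℂ ζ₁) ^ 2) / (starRingEnd ℂ ζ₁) ^ 2) • (1 : Matrix (Fin 3) (Fin 3) ℂ)
    + (((starRingEnd ℂ ζ₁) ^ 2 - ζ₁ ^ 2) / (starRingEnd ℂ ζ₁) ^ 2) •
        (Nmat ζ₁ φ ζ * Mmat ζ₁ φ ζ)

/-- Cleared (division-free) version of `Nmat`: `Nmat = (ζ₁ D D')⁻¹ • Nmat'`. -/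
def Nmat' (ζ₁ : ℂ) (φ : Fin 3 → ℂ) (ζ : ℂ) : Matrix (Fin 3) (Fin 3) ℂ :=
  Matrix.diagonal ![ζ * φ 0 * starRingEnd ℂ (Dval ζ₁ φ),
    ζ * φ 1 * Dval ζ₁ φ, ζ * φ 2 * Dval ζ₁ φ]

/-- Cleared (division-free) version of `Tmat`. -/
def Umat (ζ₁ : ℂ) (φ : Fin 3 → ℂ) (ζ : ℂ) : Matrix (Fin 3) (Fin 3) ℂ :=
  (ζ₁ * Dval ζ₁ φ * starRingEnd ℂ (Dval ζ₁ φ) * (ζ ^ 2 - (starRingEnd ℂ ζ₁) ^ 2)) •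
      (1 : Matrix (Fin 3) (Fin 3) ℂ)
    + ((starRingEnd ℂ ζ₁) ^ 2 - ζ₁ ^ 2) • (Nmat' ζ₁ φ ζ * Mmat ζ₁ φ ζ)

set_option maxHeartbeats 2000000

/-- T(μ)† T(μ^*) is the scalar matrix
 (1/|ζ₁|⁴)((μ^*)² − (ζ₁^*)²)((μ^*)² − ζ₁²) I₃. -/
theorem darboux_matrix_conjugate_transpose_product
    (ζ₁ : ℂ) (hζ₁ : ζ₁ ≠ 0)
    (φ : Fin 3 → ℂ) (hD : Dval ζ₁ φ ≠ 0) :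
    ∀ μ : ℂ,
      (Tmat ζ₁ φ μ)ᴴ * Tmat ζ₁ φ (starRingEnd ℂ μ) =
        ((1 / ((‖ζ₁‖ ^ 4 : ℝ) : ℂ)) *
          ((starRingEnd ℂ μ) ^ 2 - (starRingEnd ℂ ζ₁) ^ 2) *
          ((starRingEnd ℂ μ) ^ 2 - ζ₁ ^ 2)) • (1 : Matrix (Fin 3) (Fin 3) ℂ) := by
  intro μ
  have hζ₁' : starRingEnd ℂ ζ₁ ≠ 0 := by simpa using hζ₁
  have hD' : starRingEnd ℂ (Dval ζ₁ φ) ≠ 0 := by simpa using hD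
  have habs : ((‖ζ₁‖ ^ 4 : ℝ) : ℂ) = (ζ₁ * starRingEnd ℂ ζ₁) ^ 2 := by
    have h4 : ‖ζ₁‖ ^ 4 = Complex.normSq ζ₁ ^ 2 := by
      rw [show (4:ℕ) = 2*2 from rfl, pow_mul, Complex.sq_norm]
    rw [h4, Complex.ofReal_pow, ← Complex.mul_conj]
  have ha : ∀ i : Fin 3, ((‖φ i‖ ^ 2 : ℝ) : ℂ) = φ i * starRingEnd ℂ (φ i) := by
    intro i
    rw [Complex.sq_norm, Complex.mul_conj]
  have hDdef : Dval ζ₁ φ = ζ₁ * (φ 0 * starRingEnd ℂ (φ 0))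
      + starRingEnd ℂ ζ₁ * (φ 1 * starRingEnd ℂ (φ 1) + φ 2 * starRingEnd ℂ (φ 2)) := by
    rw [Dval, ha 0, ha 1, ha 2]
  have hDconj : starRingEnd ℂ (Dval ζ₁ φ) = starRingEnd ℂ ζ₁ * (φ 0 * starRingEnd ℂ (φ 0))
      + ζ₁ * (φ 1 * starRingEnd ℂ (φ 1) + φ 2 * starRingEnd ℂ (φ 2)) := by
    rw [hDdef]
    simp only [map_add, _root_.map_mul, Complex.conj_conj]
    ring
  -- the scalar clearing the denominators
  set q : ℂ := (starRingEnd ℂ ζ₁) ^ 2 * ζ₁ * Dval ζ₁ φ * starRingEnd ℂ (Dval ζ₁ φ) with hq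
  have hqne : q ≠ 0 := by
    simp only [hq]
    exact mul_ne_zero (mul_ne_zero (mul_ne_zero (pow_ne_zero 2 hζ₁') hζ₁) hD) hD'
  have hT : ∀ ζ : ℂ, Tmat ζ₁ φ ζ = q⁻¹ • Umat ζ₁ φ ζ := by
    intro ζ
    ext i j
    fin_cases i <;> fin_cases j <;>
    · simp only [Tmat, Umat, Nmat, Nmat', Mmat, Matrix.add_apply, Matrix.smul_apply,
        Matrix.mul_apply, Fin.sum_univ_three, Matrix.one_apply, Matrix.diagonal_apply,
        Matrix.cons_val', Matrix.cons_val_zero, Matrix.cons_val_one, Matrix.head_cons,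
        Matrix.cons_val_two, Matrix.tail_cons, Matrix.head_fin_const, Matrix.empty_val',
        Matrix.cons_val_fin_one, Matrix.of_apply, Matrix.vecHead, Matrix.vecTail,
        smul_eq_mul, hq]
      norm_num [Fin.ext_iff]
      field_simp [hζ₁, hζ₁', hD, hD']
  have hU : (Umat ζ₁ φ μ)ᴴ * Umat ζ₁ φ (starRingEnd ℂ μ) =
      (ζ₁ * starRingEnd ℂ ζ₁ * (Dval ζ₁ φ) ^ 2 * (starRingEnd ℂ (Dval ζ₁ φ)) ^ 2 *
        ((starRingEnd ℂ μ) ^ 2 - (starRingEnd ℂ ζ₁) ^ 2) *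
        ((starRingEnd ℂ μ) ^ 2 - ζ₁ ^ 2)) • (1 : Matrix (Fin 3) (Fin 3) ℂ) := by
    ext i j
    fin_cases i <;> fin_cases j <;>
    · simp only [Umat, Nmat', Mmat, Matrix.conjTranspose_apply, Matrix.add_apply,
        Matrix.smul_apply, Matrix.mul_apply, Fin.sum_univ_three, Matrix.one_apply,
        Matrix.diagonal_apply, Matrix.cons_val', Matrix.cons_val_zero, Matrix.cons_val_one,
        Matrix.head_cons, Matrix.cons_val_two, Matrix.tail_cons, Matrix.head_fin_const,
        Matrix.empty_val', Matrix.cons_val_fin_one, Matrix.of_apply, Matrix.vecHead,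
        Matrix.vecTail, Complex.star_def, map_add, _root_.map_mul, map_pow, map_sub,
        _root_.map_one, _root_.map_zero, Complex.conj_conj, smul_eq_mul]
      norm_num [Fin.ext_iff]
      rw [hDconj, hDdef]
      ring
  have hqconj : star q⁻¹ = (ζ₁ ^ 2 * starRingEnd ℂ ζ₁ * starRingEnd ℂ (Dval ζ₁ φ)
      * Dval ζ₁ φ)⁻¹ := by
    simp only [Complex.star_def, hq, map_inv₀, _root_.map_mul, map_pow, Complex.conj_conj]
  rw [hT μ, hT (starRingEnd ℂ μ), Matrix.conjTranspose_smul, Matrix.smul_mul, Matrix.mul_smul,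
    hU, smul_smul, smul_smul, habs, hqconj, hq]
  congr 1
  field_simp
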